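/- arXiv:2106.13944 — 9 statements merged into one kernel-verified Lean document; each statement's English description precedes it below -/
import Mathlib

section
/- Let φ(f,g,h,u,v,w) = f·u + g·v + h·w. For any integers p, q, r, a, b, c, define x₁ = φ(p,q,r,a,b,c), x₂ = φ(p,q,r,b,c,a), x₃ = φ(p,q,r,c,a,b), y₁ = φ(p,q,r,a,c,b), y₂ = φ(p,q,r,c,b,a), y₃ = φ(p,q,r,b,a,c). Then x₁² + x₂² + x₃² = y₁² + y₂² + y₃². -/
theorem stmt_1 (p q r a b c : ℤ)
    (φ : ℤ → ℤ → ℤ → ℤ → ℤ → ℤ → ℤ)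
    (hφ : ∀ f g h u v w, φ f g h u v w = f*u + g*v + h*w)
    (x₁ x₂ x₃ y₁ y₂ y₃ : ℤ)
    (hx₁ : x₁ = φ p q r a b c) (hx₂ : x₂ = φ p q r b c a) (hx₃ : x₃ = φ p q r c a b)
    (hy₁ : y₁ = φ p q r a c b) (hy₂ : y₂ = φ p q r c b a) (hy₃ : y₃ = φ p q r b a c) :
    x₁^2 + x₂^2 + x₃^2 = y₁^2 + y₂^2 + y₃^2 := by
  subst hx₁ hx₂ hx₃ hy₁ hy₂ hy₃
  simp only [hφ]; ring
end

section
/- Let φ(a,b,c,d) = (ab+cd)(ac−bd). For any integers p, q, r, s, define X₁ = φ(p,q,r,s), X₂ = φ(p,r,s,q), X₃ = φ(p,s,q,r), Y₁ = φ(p,q,s,r), Y₂ = φ(p,r,q,s), Y₃ = φ(p,s,r,q). Then X₁² + X₂² + X₃² = Y₁² + Y₂² + Y₃². -/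
theorem stmt_6 (p q r s : ℤ)
    (φ : ℤ → ℤ → ℤ → ℤ → ℤ)
    (hφ : ∀ a b c d, φ a b c d = (a*b + c*d)*(a*c - b*d))
    (X₁ X₂ X₃ Y₁ Y₂ Y₃ : ℤ)
    (hX₁ : X₁ = φ p q r s) (hX₂ : X₂ = φ p r s q) (hX₃ : X₃ = φ p s q r)
    (hY₁ : Y₁ = φ p q s r) (hY₂ : Y₂ = φ p r q s) (hY₃ : Y₃ = φ p s r q) :
    X₁^2 + X₂^2 + X₃^2 = Y₁^2 + Y₂^2 + Y₃^2 := by subst hX₁ hX₂ hX₃ hY₁ hY₂ hY₃; simp only [hφ]; ring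
end

section
/- Let φ(a,b,c,d) = (ab+cd)(ac−bd). For any integers p, q, r, s, define X₁ = φ(p,q,r,s), X₂ = φ(p,r,s,q), X₃ = φ(p,s,q,r), Y₁ = φ(p,q,s,r), Y₂ = φ(p,r,q,s), Y₃ = φ(p,s,r,q). Then X₁·X₂·X₃ = Y₁·Y₂·Y₃. -/
theorem stmt_7 (p q r s : ℤ)
    (φ : ℤ → ℤ → ℤ → ℤ → ℤ)
    (hφ : ∀ a b c d, φ a b c d = (a*b + c*d)*(a*c - b*d))
    (X₁ X₂ X₃ Y₁ Y₂ Y₃ : ℤ)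
    (hX₁ : X₁ = φ p q r s) (hX₂ : X₂ = φ p r s q) (hX₃ : X₃ = φ p s q r)
    (hY₁ : Y₁ = φ p q s r) (hY₂ : Y₂ = φ p r q s) (hY₃ : Y₃ = φ p s r q) :
    X₁ * X₂ * X₃ = Y₁ * Y₂ * Y₃ := by
  subst hX₁ hX₂ hX₃ hY₁ hY₂ hY₃
  simp only [hφ]; ring
end

section
/- Let φ(a,b,c,d) = a²bc + abc² + ac²d + acd² + b²cd + bc²d. For any integers p, q, r, s, with x₁ = φ(p,q,r,s), x₂ = φ(p,r,s,q), x₃ = φ(p,s,q,r), x₄ = φ(q,r,p,s), y₁ = φ(p,q,s,r), y₂ = φ(p,r,q,s), y₃ = φ(p,s,r,q), y₄ = φ(q,s,p,r), one has x₁² + x₂² + x₃² + x₄² = y₁² + y₂² + y₃² + y₄². -/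
theorem stmt_11 (p q r s : ℤ)
    (φ : ℤ → ℤ → ℤ → ℤ → ℤ)
    (hφ : ∀ a b c d, φ a b c d = a^2*b*c + a*b*c^2 + a*c^2*d + a*c*d^2 + b^2*c*d + b*c^2*d)
    (x₁ x₂ x₃ x₄ y₁ y₂ y₃ y₄ : ℤ)
    (hx₁ : x₁ = φ p q r s) (hx₂ : x₂ = φ p r s q) (hx₃ : x₃ = φ p s q r) (hx₄ : x₄ = φ q r p s)
    (hy₁ : y₁ = φ p q s r) (hy₂ : y₂ = φ p r q s) (hy₃ : y₃ = φ p s r q) (hy₄ : y₄ = φ q s p r) :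
    x₁^2 + x₂^2 + x₃^2 + x₄^2 = y₁^2 + y₂^2 + y₃^2 + y₄^2 := by
  subst hx₁ hx₂ hx₃ hx₄ hy₁ hy₂ hy₃ hy₄
  simp only [hφ]
  ring
end

section
/- Let φ(a,b,c,d) = a²bc + abc² + ac²d + acd² + b²cd + bc²d. For any integers p, q, r, s, with x₁ = φ(p,q,r,s), x₂ = φ(p,r,s,q), x₃ = φ(p,s,q,r), x₄ = φ(q,r,p,s), y₁ = φ(p,q,s,r), y₂ = φ(p,r,q,s), y₃ = φ(p,s,r,q), y₄ = φ(q,s,p,r), one has x₁³ + x₂³ + x₃³ + x₄³ = y₁³ + y₂³ + y₃³ + y₄³. -/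
theorem stmt_12 (p q r s : ℤ)
    (φ : ℤ → ℤ → ℤ → ℤ → ℤ)
    (hφ : ∀ a b c d, φ a b c d = a^2*b*c + a*b*c^2 + a*c^2*d + a*c*d^2 + b^2*c*d + b*c^2*d)
    (x₁ x₂ x₃ x₄ y₁ y₂ y₃ y₄ : ℤ)
    (hx₁ : x₁ = φ p q r s) (hx₂ : x₂ = φ p r s q) (hx₃ : x₃ = φ p s q r) (hx₄ : x₄ = φ q r p s)
    (hy₁ : y₁ = φ p q s r) (hy₂ : y₂ = φ p r q s) (hy₃ : y₃ = φ p s r q) (hy₄ : y₄ = φ q s p r) :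
    x₁^3 + x₂^3 + x₃^3 + x₄^3 = y₁^3 + y₂^3 + y₃^3 + y₄^3 := by
  subst hx₁ hx₂ hx₃ hx₄ hy₁ hy₂ hy₃ hy₄
  simp only [hφ]
  ring
end

section
/- Let ψ(a,b,c,d) = (bc − bd − cd)a² − (ac + ad − cd)b² + (ab + ad + bd)c² − (ab − ac + bc)d². For any integers p, q, r, s, with x₁ = ψ(p,q,r,s), x₂ = ψ(p,r,s,q), x₃ = ψ(p,s,q,r), x₄ = ψ(q,r,p,s), y₁ = ψ(p,q,s,r), y₂ = ψ(p,r,q,s), y₃ = ψ(p,s,r,q), y₄ = ψ(q,s,p,r), the equalities Σᵢ xᵢʲ = Σᵢ yᵢʲ hold for j = 1, 2, 3. -/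
theorem stmt_14 (p q r s : ℤ)
    (ψ : ℤ → ℤ → ℤ → ℤ → ℤ)
    (hψ : ∀ a b c d, ψ a b c d =
      (b*c - b*d - c*d)*a^2 - (a*c + a*d - c*d)*b^2
        + (a*b + a*d + b*d)*c^2 - (a*b - a*c + b*c)*d^2)
    (x₁ x₂ x₃ x₄ y₁ y₂ y₃ y₄ : ℤ)
    (hx₁ : x₁ = ψ p q r s) (hx₂ : x₂ = ψ p r s q) (hx₃ : x₃ = ψ p s q r) (hx₄ : x₄ = ψ q r p s)
    (hy₁ : y₁ = ψ p q s r) (hy₂ : y₂ = ψ p r q s) (hy₃ : y₃ = ψ p s r q) (hy₄ : y₄ = ψ q s p r) :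
    (x₁ + x₂ + x₃ + x₄ = y₁ + y₂ + y₃ + y₄) ∧
    (x₁^2 + x₂^2 + x₃^2 + x₄^2 = y₁^2 + y₂^2 + y₃^2 + y₄^2) ∧
    (x₁^3 + x₂^3 + x₃^3 + x₄^3 = y₁^3 + y₂^3 + y₃^3 + y₄^3) := by
  subst hx₁ hx₂ hx₃ hx₄ hy₁ hy₂ hy₃ hy₄
  simp only [hψ]
  refine ⟨by ring, by ring, by ring⟩
end

section
/- Let ψ(f,g,h,u,v,w) = f(v−w) + g(w−u) + h(u−v), and define x₁, x₂, x₃, y₁, y₂, y₃ as in Choudhry's j = 1,2,4 solution. Then x₁² + x₂² + x₃² = y₁² + y₂² + y₃² = 2(p² + q² + r² − pq − qr − rp)(a² + b² + c² − ab − bc − ca). -/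
theorem stmt_16 (p q r a b c : ℤ)
    (ψ : ℤ → ℤ → ℤ → ℤ → ℤ → ℤ → ℤ)
    (hψ : ∀ f g h u v w, ψ f g h u v w = f*(v - w) + g*(w - u) + h*(u - v))
    (x₁ x₂ x₃ y₁ y₂ y₃ : ℤ)
    (hx₁ : x₁ = ψ p q r a b c) (hx₂ : x₂ = ψ p q r b c a) (hx₃ : x₃ = ψ p q r c a b)
    (hy₁ : y₁ = ψ p q r a c b) (hy₂ : y₂ = ψ p q r c b a) (hy₃ : y₃ = ψ p q r b a c) :
    x₁^2 + x₂^2 + x₃^2 = 2*(p^2 + q^2 + r^2 - p*q - q*r - r*p)*(a^2 + b^2 + c^2 - a*b - b*c - c*a) ∧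
    y₁^2 + y₂^2 + y₃^2 = 2*(p^2 + q^2 + r^2 - p*q - q*r - r*p)*(a^2 + b^2 + c^2 - a*b - b*c - c*a) := by
  subst hx₁ hx₂ hx₃ hy₁ hy₂ hy₃
  simp only [hψ]
  constructor <;> ring
end

section
/- Let ψ(f,g,h,u,v,w) = f(v−w) + g(w−u) + h(u−v), and define x₁, x₂, x₃, y₁, y₂, y₃ as in Choudhry's j = 1,2,4 solution. Then x₁⁴ + x₂⁴ + x₃⁴ = y₁⁴ + y₂⁴ + y₃⁴ = 2(p² + q² + r² − pq − qr − rp)²(a² + b² + c² − ab − bc − ca)². -/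
theorem stmt_17 (p q r a b c : ℤ)
    (ψ : ℤ → ℤ → ℤ → ℤ → ℤ → ℤ → ℤ)
    (hψ : ∀ f g h u v w, ψ f g h u v w = f*(v - w) + g*(w - u) + h*(u - v))
    (x₁ x₂ x₃ y₁ y₂ y₃ : ℤ)
    (hx₁ : x₁ = ψ p q r a b c) (hx₂ : x₂ = ψ p q r b c a) (hx₃ : x₃ = ψ p q r c a b)
    (hy₁ : y₁ = ψ p q r a c b) (hy₂ : y₂ = ψ p q r c b a) (hy₃ : y₃ = ψ p q r b a c) :
    x₁^4 + x₂^4 + x₃^4 = 2*(p^2 + q^2 + r^2 - p*q - q*r - r*p)^2*(a^2 + b^2 + c^2 - a*b - b*c - c*a)^2 ∧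
    y₁^4 + y₂^4 + y₃^4 = 2*(p^2 + q^2 + r^2 - p*q - q*r - r*p)^2*(a^2 + b^2 + c^2 - a*b - b*c - c*a)^2 := by
  subst hx₁ hx₂ hx₃ hy₁ hy₂ hy₃
  simp only [hψ]
  constructor <;> ring
end

section
/- With ψ(f,g,h,u,v,w) = f(v−w) + g(w−u) + h(u−v) and x₁ = ψ(p,q,r,a,b,c), x₂ = ψ(p,q,r,b,c,a), x₃ = ψ(p,q,r,c,a,b), y₁ = ψ(p,q,r,a,c,b), y₂ = ψ(p,q,r,c,b,a), y₃ = ψ(p,q,r,b,a,c), the six-tuples (x₁, x₂, x₃, −x₁, −x₂, −x₃) and (y₁, y₂, y₃, −y₁, −y₂, −y₃) satisfy Σᵢ₌₁⁶ xᵢʲ = Σᵢ₌₁⁶ yᵢʲ for every j = 1, 2, 3, 4, 5. -/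
theorem stmt_19 (p q r a b c : ℤ)
    (ψ : ℤ → ℤ → ℤ → ℤ → ℤ → ℤ → ℤ)
    (hψ : ∀ f g h u v w, ψ f g h u v w = f*(v - w) + g*(w - u) + h*(u - v))
    (x₁ x₂ x₃ y₁ y₂ y₃ : ℤ)
    (hx₁ : x₁ = ψ p q r a b c) (hx₂ : x₂ = ψ p q r b c a) (hx₃ : x₃ = ψ p q r c a b)
    (hy₁ : y₁ = ψ p q r a c b) (hy₂ : y₂ = ψ p q r c b a) (hy₃ : y₃ = ψ p q r b a c) :
    ∀ j : ℕ, 1 ≤ j → j ≤ 5 →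
      x₁^j + x₂^j + x₃^j + (-x₁)^j + (-x₂)^j + (-x₃)^j
        = y₁^j + y₂^j + y₃^j + (-y₁)^j + (-y₂)^j + (-y₃)^j := by
  subst hx₁ hx₂ hx₃ hy₁ hy₂ hy₃
  simp only [hψ]
  intro j h1 h5
  interval_cases j <;> ring
end
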